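/- Let (E,ℰ) be a measurable space and let (P_μ)_{μ∈𝒫(E)} be a nonlinear Markov chain whose two-step kernel Q satisfies conditions (C1) and (C2). If π, ν ∈ 𝒫(E) are both invariant (π P_π = π and ν P_ν = ν), then π = ν. -/

import Mathlib

open MeasureTheory ProbabilityTheory

/-- Total variation distance `‖μ − ν‖_TV = 2 sup_{A ∈ ℰ} |μ(A) − ν(A)|`. -/
noncomputable def tvDist {E : Type*} [MeasurableSpace E] (μ ν : Measure E) : ℝ :=
  2 * ⨆ A : {s : Set E // MeasurableSet s}, |(μ A).toReal - (ν A).toReal|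

/-- One step of the nonlinear chain: `μ ↦ μ P_μ`, `(νP_μ)(B) = ∫ P_μ(x,B) ν(dx)`. -/
noncomputable def stepMeasure {E : Type*} [MeasurableSpace E]
    (P : Measure E → Kernel E E) (μ : Measure E) : Measure E :=
  μ.bind (fun x => P μ x)

/-- Two-step transition kernel `Q_μ(x,B) = ∫ P_μ(x,dy) P_{μP_μ}(y,B)`. -/
noncomputable def twoStepKernel {E : Type*} [MeasurableSpace E]
    (P : Measure E → Kernel E E) (μ : Measure E) (x : E) : Measure E :=
  (P μ x).bind (fun y => P (stepMeasure P μ) y)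

/-- Marginal distributions `μ_{n+1} = μ_n P_{μ_n}` of the nonlinear Markov chain. -/
noncomputable def marginal {E : Type*} [MeasurableSpace E]
    (P : Measure E → Kernel E E) (μ0 : Measure E) : ℕ → Measure E
  | 0 => μ0
  | n + 1 => stepMeasure P (marginal P μ0 n)

/-!
Split two probability measures as `π = m + α`, `ν = m + β` with a common part `m` and mutually
singular remainders `α ⟂ₘ β`, both of mass `δ = ‖π - ν‖_TV / 2`, and let `S` carry `α`. For
invariant `π, ν` the two-step invariance gives
`δ = π(S) - ν(S) = ∫ Q_π(x, S) π(dx) - ∫ Q_ν(y, S) ν(dy)`.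
On the remainders (C1) bounds `Q_π(x, S) - Q_ν(y, S)` by `1 - α₂` for any `x, y`; on the common
part (C2) bounds `Q_π(x, S) - Q_ν(x, S)` by `λ₂ δ`. Hence `δ ≤ (1 - α₂) δ + λ₂ δ (1 - δ)`, and
`λ₂ ≤ α₂` forces `α₂ δ² ≤ 0`, i.e. `δ = 0`.
-/

section TotalVariation

variable {E : Type*} [MeasurableSpace E]

lemma tvDist_eq_two_mul_iSup (μ ν : Measure E) :
    tvDist μ ν = 2 * ⨆ A : {s : Set E // MeasurableSet s}, |μ.real A - ν.real A| :=
  rfl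

lemma abs_measureReal_sub_le_max (μ ν : Measure E) [IsFiniteMeasure μ] [IsFiniteMeasure ν]
    (A : Set E) : |μ.real A - ν.real A| ≤ max (μ.real Set.univ) (ν.real Set.univ) :=
  abs_sub_le_of_nonneg_of_le measureReal_nonneg
    ((measureReal_mono (Set.subset_univ A)).trans (le_max_left _ _)) measureReal_nonneg
    ((measureReal_mono (Set.subset_univ A)).trans (le_max_right _ _))

lemma abs_measureReal_sub_le_half_tvDist (μ ν : Measure E) [IsFiniteMeasure μ]
    [IsFiniteMeasure ν] {A : Set E} (hA : MeasurableSet A) :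
    |μ.real A - ν.real A| ≤ tvDist μ ν / 2 := by
  have hbdd : BddAbove (Set.range fun B : {s : Set E // MeasurableSet s} =>
      |μ.real B - ν.real B|) :=
    ⟨_, Set.forall_mem_range.2 fun B => abs_measureReal_sub_le_max μ ν B⟩
  have := le_ciSup hbdd ⟨A, hA⟩
  rw [tvDist_eq_two_mul_iSup]
  linarith

lemma measureReal_sub_le_half_tvDist (μ ν : Measure E) [IsFiniteMeasure μ]
    [IsFiniteMeasure ν] {A : Set E} (hA : MeasurableSet A) :
    μ.real A - ν.real A ≤ tvDist μ ν / 2 :=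
  (le_abs_self _).trans (abs_measureReal_sub_le_half_tvDist μ ν hA)

lemma tvDist_nonneg (μ ν : Measure E) : 0 ≤ tvDist μ ν :=
  mul_nonneg zero_le_two (Real.iSup_nonneg fun _ => abs_nonneg _)

lemma eq_of_tvDist_eq_zero {μ ν : Measure E} [IsFiniteMeasure μ] [IsFiniteMeasure ν]
    (h : tvDist μ ν = 0) : μ = ν := by
  ext A hA
  have := abs_measureReal_sub_le_half_tvDist μ ν hA
  rwa [h, zero_div, abs_nonpos_iff, sub_eq_zero, measureReal_eq_measureReal_iff] at this

lemma exists_add_mutuallySingular (μ ν : Measure E) [IsFiniteMeasure μ] [IsFiniteMeasure ν] :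
    ∃ m α β : Measure E, IsFiniteMeasure m ∧ IsFiniteMeasure α ∧ IsFiniteMeasure β ∧
      μ = m + α ∧ ν = m + β ∧ α ⟂ₘ β := by
  obtain ⟨s, hs⟩ := exists_isHahnDecomposition μ ν
  refine ⟨μ.restrict s + ν.restrict sᶜ, μ.restrict sᶜ - ν.restrict sᶜ,
    ν.restrict s - μ.restrict s, inferInstance, inferInstance, inferInstance, ?_, ?_,
    s, hs.measurableSet, ?_, ?_⟩
  · rw [add_assoc, add_comm (ν.restrict sᶜ), Measure.sub_add_cancel_of_le hs.ge_on_compl,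
      Measure.restrict_add_restrict_compl hs.measurableSet]
  · rw [add_right_comm, add_comm (μ.restrict s), Measure.sub_add_cancel_of_le hs.le_on,
      Measure.restrict_add_restrict_compl hs.measurableSet]
  · exact nonpos_iff_eq_zero.1 <| (Measure.le_iff'.1 Measure.sub_le s).trans
      (by simp [Measure.restrict_apply hs.measurableSet])
  · exact nonpos_iff_eq_zero.1 <| (Measure.le_iff'.1 Measure.sub_le sᶜ).trans
      (by simp [Measure.restrict_apply hs.measurableSet.compl])

section CommonPart

variable {m α β : Measure E} [IsFiniteMeasure m] [IsFiniteMeasure α] [IsFiniteMeasure β]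

lemma measureReal_univ_eq_of_add (h : (m + α) Set.univ = (m + β) Set.univ) :
    α.real Set.univ = β.real Set.univ := by
  have := congrArg ENNReal.toReal h
  rw [← measureReal_def, ← measureReal_def, measureReal_add_apply, measureReal_add_apply] at this
  linarith

lemma measureReal_add_sub_measureReal_add (A : Set E) :
    (m + α).real A - (m + β).real A = α.real A - β.real A := by
  rw [measureReal_add_apply, measureReal_add_apply]
  ring

lemma measureReal_add_sub_measureReal_add_of_compl_null {S : Set E} (hS : MeasurableSet S)
    (hαS : α Sᶜ = 0) (hβS : β S = 0) :
    (m + α).real S - (m + β).real S = α.real Set.univ := by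
  have hα : α.real Sᶜ = 0 := by simp [measureReal_def, hαS]
  have hβ : β.real S = 0 := by simp [measureReal_def, hβS]
  rw [measureReal_add_sub_measureReal_add]
  linarith [measureReal_compl (μ := α) hS]

lemma tvDist_add_add_of_mutuallySingular (hmass : α.real Set.univ = β.real Set.univ)
    (h : α ⟂ₘ β) : tvDist (m + α) (m + β) = 2 * α.real Set.univ := by
  obtain ⟨s, hs, hαs, hβs⟩ := h
  refine le_antisymm ?_ ?_
  · have : Nonempty {s : Set E // MeasurableSet s} := ⟨⟨∅, .empty⟩⟩
    rw [tvDist_eq_two_mul_iSup]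
    refine mul_le_mul_of_nonneg_left (ciSup_le fun A => ?_) zero_le_two
    rw [measureReal_add_sub_measureReal_add, ← max_self (α.real Set.univ)]
    nth_rw 2 [hmass]
    exact abs_measureReal_sub_le_max α β A
  · have := abs_measureReal_sub_le_half_tvDist (m + α) (m + β) hs.compl
    rw [measureReal_add_sub_measureReal_add_of_compl_null hs.compl
      (by rwa [compl_compl]) hβs] at this
    linarith [le_abs_self (α.real Set.univ)]

end CommonPart

end TotalVariation

section Coupling

variable {E : Type*} [MeasurableSpace E] {g f : E → ℝ} {a b : ℝ}

lemma integral_sub_integral_le_mul_of_forall_sub_le {α β : Measure E} [IsFiniteMeasure α]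
    [IsFiniteMeasure β] (hmass : α.real Set.univ = β.real Set.univ) (hg : Integrable g α)
    (hf : Integrable f β) (hgf : ∀ x y, g x - f y ≤ a) :
    ∫ x, g x ∂α - ∫ y, f y ∂β ≤ a * α.real Set.univ := by
  rcases isEmpty_or_nonempty E with hE | hE
  · simp [Measure.eq_zero_of_isEmpty α, Measure.eq_zero_of_isEmpty β]
  have ⟨x₀⟩ := hE
  have hf_bdd : BddBelow (Set.range f) :=
    ⟨g x₀ - a, by rintro _ ⟨y, rfl⟩; linarith [hgf x₀ y]⟩
  set c := ⨅ y, f y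
  have hg_le : ∀ x, g x ≤ c + a := fun x =>
    sub_le_iff_le_add.1 (le_ciInf fun y => by linarith [hgf x y])
  have hg_int : ∫ x, g x ∂α ≤ (c + a) * α.real Set.univ := by
    calc ∫ x, g x ∂α ≤ ∫ _, c + a ∂α := integral_mono hg (integrable_const _) hg_le
      _ = (c + a) * α.real Set.univ := by rw [integral_const, smul_eq_mul, mul_comm]
  have hf_int : c * β.real Set.univ ≤ ∫ y, f y ∂β := by
    calc c * β.real Set.univ = ∫ _, c ∂β := by rw [integral_const, smul_eq_mul, mul_comm]
      _ ≤ ∫ y, f y ∂β := integral_mono (integrable_const _) hf (fun y => ciInf_le hf_bdd y)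
  rw [← hmass] at hf_int
  linarith

lemma integral_add_sub_integral_add_le {m α β : Measure E} [IsFiniteMeasure m]
    [IsFiniteMeasure α] [IsFiniteMeasure β] (hmass : α.real Set.univ = β.real Set.univ)
    (hg : Integrable g (m + α)) (hf : Integrable f (m + β)) (hgf : ∀ x y, g x - f y ≤ a)
    (hdiag : ∀ x, g x - f x ≤ b) :
    ∫ x, g x ∂(m + α) - ∫ y, f y ∂(m + β) ≤ a * α.real Set.univ + b * m.real Set.univ := by
  obtain ⟨hgm, hgα⟩ := integrable_add_measure.1 hg
  obtain ⟨hfm, hfβ⟩ := integrable_add_measure.1 hf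
  have hcommon : ∫ x, g x ∂m - ∫ x, f x ∂m ≤ b * m.real Set.univ := by
    calc ∫ x, g x ∂m - ∫ x, f x ∂m = ∫ x, g x - f x ∂m := (integral_sub hgm hfm).symm
      _ ≤ ∫ _, b ∂m := integral_mono (hgm.sub hfm) (integrable_const _) hdiag
      _ = b * m.real Set.univ := by rw [integral_const, smul_eq_mul, mul_comm]
  rw [integral_add_measure hgm hgα, integral_add_measure hfm hfβ]
  linarith [integral_sub_integral_le_mul_of_forall_sub_le hmass hgα hfβ hgf]

variable (μ ν : Measure E) [IsProbabilityMeasure μ] [IsProbabilityMeasure ν]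

lemma integral_sub_integral_le_of_forall_sub_le (hg : Integrable g μ) (hf : Integrable f ν)
    (hgf : ∀ x y, g x - f y ≤ a) (hdiag : ∀ x, g x - f x ≤ b) :
    ∫ x, g x ∂μ - ∫ y, f y ∂ν ≤ a * (tvDist μ ν / 2) + b * (1 - tvDist μ ν / 2) := by
  obtain ⟨m, α, β, _, _, _, rfl, rfl, hαβ⟩ := exists_add_mutuallySingular μ ν
  have hmass := measureReal_univ_eq_of_add (m := m) (α := α) (β := β) (by simp)
  have hone : m.real Set.univ + α.real Set.univ = 1 := by
    rw [← measureReal_add_apply, probReal_univ]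
  rw [tvDist_add_add_of_mutuallySingular hmass hαβ, mul_div_cancel_left₀ _ two_ne_zero, ← hone,
    add_sub_cancel_right]
  exact integral_add_sub_integral_add_le hmass hg hf hgf hdiag

lemma exists_measureReal_sub_eq_half_tvDist :
    ∃ S, MeasurableSet S ∧ μ.real S - ν.real S = tvDist μ ν / 2 := by
  obtain ⟨m, α, β, _, _, _, rfl, rfl, hαβ⟩ := exists_add_mutuallySingular μ ν
  obtain ⟨s, hs, hαs, hβs⟩ := hαβ
  have hmass := measureReal_univ_eq_of_add (m := m) (α := α) (β := β) (by simp)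
  refine ⟨sᶜ, hs.compl, ?_⟩
  rw [tvDist_add_add_of_mutuallySingular hmass ⟨s, hs, hαs, hβs⟩,
    measureReal_add_sub_measureReal_add_of_compl_null hs.compl (by rwa [compl_compl]) hβs]
  ring

lemma tvDist_le_two : tvDist μ ν ≤ 2 := by
  obtain ⟨S, -, hS⟩ := exists_measureReal_sub_eq_half_tvDist μ ν
  linarith [measureReal_le_one (μ := μ) (s := S), measureReal_nonneg (μ := ν) (s := S)]

end Coupling

lemma measureReal_comp {E F : Type*} [MeasurableSpace E] [MeasurableSpace F]
    (κ : Kernel E F) [IsFiniteKernel κ] (μ : Measure E) {s : Set F} (hs : MeasurableSet s) :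
    (κ ∘ₘ μ).real s = ∫ x, (κ x).real s ∂μ := by
  rw [measureReal_def, Measure.bind_apply hs κ.aemeasurable]
  exact (integral_toReal (κ.measurable_coe hs).aemeasurable
    (ae_of_all _ fun _ => measure_lt_top _ _)).symm

section NonlinearChain

variable {E : Type*} [MeasurableSpace E] {P : Measure E → Kernel E E}

lemma twoStepKernel_eq_comp (μ : Measure E) :
    twoStepKernel P μ = ⇑(P (stepMeasure P μ) ∘ₖ P μ) :=
  rfl

variable [∀ μ, IsMarkovKernel (P μ)]

instance (μ : Measure E) (x : E) : IsProbabilityMeasure (twoStepKernel P μ x) := by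
  rw [twoStepKernel_eq_comp]
  infer_instance

lemma integrable_measureReal_twoStepKernel (μ ν : Measure E) [IsFiniteMeasure ν] {s : Set E}
    (hs : MeasurableSet s) : Integrable (fun x => (twoStepKernel P μ x).real s) ν := by
  rw [twoStepKernel_eq_comp]
  exact Kernel.IsMarkovKernel.integrable ν _ hs

lemma measureReal_eq_integral_twoStepKernel {μ : Measure E} (hμ : stepMeasure P μ = μ)
    {s : Set E} (hs : MeasurableSet s) : μ.real s = ∫ x, (twoStepKernel P μ x).real s ∂μ := by
  have hcomp : (P μ ∘ₖ P μ) ∘ₘ μ = μ := by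
    rw [← Measure.comp_assoc]
    change P μ ∘ₘ stepMeasure P μ = μ
    rw [hμ]
    exact hμ
  rw [twoStepKernel_eq_comp, hμ, ← measureReal_comp _ _ hs, hcomp]

lemma half_tvDist_le_of_stepMeasure_eq {π ν : Measure E} [IsProbabilityMeasure π]
    [IsProbabilityMeasure ν] (hπ : stepMeasure P π = π) (hν : stepMeasure P ν = ν) {a b : ℝ}
    (hQ : ∀ x y, tvDist (twoStepKernel P π x) (twoStepKernel P ν y) ≤ 2 * a)
    (hQ_diag : ∀ x, tvDist (twoStepKernel P π x) (twoStepKernel P ν x) ≤ 2 * b) :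
    tvDist π ν / 2 ≤ a * (tvDist π ν / 2) + b * (1 - tvDist π ν / 2) := by
  obtain ⟨S, hS, hδ⟩ := exists_measureReal_sub_eq_half_tvDist π ν
  calc tvDist π ν / 2
      = ∫ x, (twoStepKernel P π x).real S ∂π - ∫ y, (twoStepKernel P ν y).real S ∂ν := by
        rw [← hδ, measureReal_eq_integral_twoStepKernel hπ hS,
          measureReal_eq_integral_twoStepKernel hν hS]
    _ ≤ a * (tvDist π ν / 2) + b * (1 - tvDist π ν / 2) :=
      integral_sub_integral_le_of_forall_sub_le π ν
        (integrable_measureReal_twoStepKernel π π hS)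
        (integrable_measureReal_twoStepKernel ν ν hS)
        (fun x y => by
          linarith [measureReal_sub_le_half_tvDist (twoStepKernel P π x) (twoStepKernel P ν y) hS,
            hQ x y])
        (fun x => by
          linarith [measureReal_sub_le_half_tvDist (twoStepKernel P π x) (twoStepKernel P ν x) hS,
            hQ_diag x])

end NonlinearChain

theorem invariant_measure_unique_general
    {E : Type*} [MeasurableSpace E]
    (P : Measure E → Kernel E E) (hP : ∀ μ, IsMarkovKernel (P μ))
    (α₂ lam₂ : ℝ) (hα₂0 : 0 < α₂)
    (hlam₂α : lam₂ ≤ α₂)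
    (C1 : ∀ (μ ν : Measure E), IsProbabilityMeasure μ → IsProbabilityMeasure ν →
      ∀ x y : E, tvDist (twoStepKernel P μ x) (twoStepKernel P ν y) ≤ 2 * (1 - α₂))
    (C2 : ∀ (μ ν : Measure E), IsProbabilityMeasure μ → IsProbabilityMeasure ν →
      ∀ x : E, tvDist (twoStepKernel P μ x) (twoStepKernel P ν x) ≤ lam₂ * tvDist μ ν)
    (π ν : Measure E) (hπ : IsProbabilityMeasure π) (hν : IsProbabilityMeasure ν)
    (hπinv : stepMeasure P π = π) (hνinv : stepMeasure P ν = ν) :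
    π = ν := by
  set δ := tvDist π ν / 2 with hδ_def
  have hδ_nonneg : 0 ≤ δ := div_nonneg (tvDist_nonneg π ν) zero_le_two
  have hδ_le_one : δ ≤ 1 := by linarith [tvDist_le_two π ν]
  have hcontract : δ ≤ (1 - α₂) * δ + lam₂ * δ * (1 - δ) :=
    half_tvDist_le_of_stepMeasure_eq hπinv hνinv (C1 π ν hπ hν)
      (fun x => (C2 π ν hπ hν x).trans_eq (by ring))
  have hδ_sq : α₂ * δ ^ 2 ≤ 0 := by
    nlinarith [mul_le_mul_of_nonneg_right hlam₂α (mul_nonneg hδ_nonneg (sub_nonneg.2 hδ_le_one))]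
  have hδ_zero : δ = 0 := pow_eq_zero_iff two_ne_zero |>.1 <|
    le_antisymm (nonpos_of_mul_nonpos_right hδ_sq hα₂0) (sq_nonneg δ)
  exact eq_of_tvDist_eq_zero (by linarith)

/-- under (C1) and (C2) for the two-step kernel, any two invariant
probability measures coincide. -/
theorem invariant_measure_unique
    {E : Type*} [MeasurableSpace E]
    (P : Measure E → Kernel E E) (hP : ∀ μ, IsMarkovKernel (P μ))
    (α₂ lam₂ : ℝ) (hα₂0 : 0 < α₂) (hα₂1 : α₂ < 1)
    (hlam₂0 : 0 ≤ lam₂) (hlam₂α : lam₂ ≤ α₂)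
    (C1 : ∀ (μ ν : Measure E), IsProbabilityMeasure μ → IsProbabilityMeasure ν →
      ∀ x y : E, tvDist (twoStepKernel P μ x) (twoStepKernel P ν y) ≤ 2 * (1 - α₂))
    (C2 : ∀ (μ ν : Measure E), IsProbabilityMeasure μ → IsProbabilityMeasure ν →
      ∀ x : E, tvDist (twoStepKernel P μ x) (twoStepKernel P ν x) ≤ lam₂ * tvDist μ ν)
    (π ν : Measure E) (hπ : IsProbabilityMeasure π) (hν : IsProbabilityMeasure ν)
    (hπinv : stepMeasure P π = π) (hνinv : stepMeasure P ν = ν) :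
    π = ν :=
  invariant_measure_unique_general P hP α₂ lam₂ hα₂0 hlam₂α C1 C2 π ν hπ hν hπinv hνinv
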